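/- Let G be a commutative (abelian) topological group. If μ, ν ∈ Meas(rG) are uniform measures, then μ ⋆ ν = ν ⋆ μ, i.e., (μ ⋆ ν)(f) = (ν ⋆ μ)(f) for every f ∈ Ub(rG). -/

import Mathlib

noncomputable section

open Filter Topology

/-- `f` is a bounded uniformly continuous real-valued function,
i.e. a member of `Ub(X)`. -/
def IsUb {X : Type*} [UniformSpace X] (f : X → ℝ) : Prop :=
  UniformContinuous f ∧ ∃ C : ℝ, ∀ x, |f x| ≤ C

/-- Supremum norm of a real-valued function. -/
def supNorm {α : Type*} (f : α → ℝ) : ℝ :=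
  sSup (Set.range fun x => |f x|)

/-- `μ` is (the restriction to `Ub(X)` of) a norm-continuous linear functional on `Ub(X)`,
i.e. a member of `Meas(X)`.  It is represented as a bare map on all functions;
only its values on `Ub(X)` are relevant. -/
def IsMeas {X : Type*} [UniformSpace X] (μ : (X → ℝ) → ℝ) : Prop :=
  (∀ f g : X → ℝ, IsUb f → IsUb g → μ (f + g) = μ f + μ g) ∧
  (∀ (c : ℝ) (f : X → ℝ), IsUb f → μ (c • f) = c * μ f) ∧
  (∃ C : ℝ, ∀ f : X → ℝ, IsUb f → (∀ x, |f x| ≤ 1) → |μ f| ≤ C)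

/-- The dual norm on `Meas(X)`:  `‖μ‖ = sup {|μ f| : f ∈ Ub(X), ‖f‖ ≤ 1}`. -/
def measNorm {X : Type*} [UniformSpace X] (μ : (X → ℝ) → ℝ) : ℝ :=
  sSup {r : ℝ | ∃ f : X → ℝ, IsUb f ∧ (∀ x, |f x| ≤ 1) ∧ r = |μ f|}

/-- `μ` is a positive functional:  `μ f ≥ 0` whenever `f ∈ Ub(X)` and `f ≥ 0`. -/
def IsPositive {X : Type*} [UniformSpace X] (μ : (X → ℝ) → ℝ) : Prop :=
  ∀ f : X → ℝ, IsUb f → (∀ x, 0 ≤ f x) → 0 ≤ μ f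

/-- `μ` is a *uniform measure*: on every norm-bounded uniformly equicontinuous set
`H ⊆ Ub(X)`, `μ` is continuous for the topology of pointwise convergence. -/
def IsUniformMeasure {X : Type*} [UniformSpace X] (μ : (X → ℝ) → ℝ) : Prop :=
  ∀ H : Set (X → ℝ),
    (∃ C : ℝ, ∀ f ∈ H, ∀ x, |f x| ≤ C) →
    H.UniformEquicontinuous →
    ∀ f₀ ∈ H, ∀ ε : ℝ, 0 < ε →
      ∃ (K : Finset X) (δ : ℝ), 0 < δ ∧
        ∀ f ∈ H, (∀ x ∈ K, |f x - f₀ x| < δ) → |μ f - μ f₀| < ε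

/-- A *semiuniform* function on `X × Y`, i.e. a member of `Ub(X ⋉ Y)` where `X ⋉ Y` is the
semiuniform product: `f` is bounded, the family of sections `x ↦ f (x, y)` (for `y ∈ Y`)
is uniformly equicontinuous on `X`, and every section `y ↦ f (x, y)` is uniformly
continuous on `Y`. -/
def Semiuniform {X Y : Type*} [UniformSpace X] [UniformSpace Y] (f : X × Y → ℝ) : Prop :=
  (∃ C : ℝ, ∀ p, |f p| ≤ C) ∧
  UniformEquicontinuous (fun y : Y => fun x : X => f (x, y)) ∧
  ∀ x : X, UniformContinuous fun y : Y => f (x, y)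

/-- The direct product `μ ⊗ ν`, evaluated at `f : X × Y → ℝ`:
`(μ ⊗ ν)(f) = μ (x ↦ ν (y ↦ f (x, y)))`. -/
def dirProd {X Y : Type*} (μ : (X → ℝ) → ℝ) (ν : (Y → ℝ) → ℝ) (f : X × Y → ℝ) : ℝ :=
  μ fun x => ν fun y => f (x, y)

/-- Convolution: `(μ ⋆ ν)(f) = μ (x ↦ ν (y ↦ f (x · y)))`. -/
def conv {G : Type*} [Mul G] (μ ν : (G → ℝ) → ℝ) : (G → ℝ) → ℝ :=
  fun f => μ fun x => ν fun y => f (x * y)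

/-- The weak-* topology on `Meas(X)`: the topology of pointwise convergence on `Ub(X)`. -/
def weakStarMeas (X : Type*) [UniformSpace X] :
    TopologicalSpace {ν : (X → ℝ) → ℝ // IsMeas ν} :=
  TopologicalSpace.induced
    (fun ν => fun f : {f : X → ℝ // IsUb f} => ν.1 f.1) Pi.topologicalSpace

/-!
Write `F x = ν (f (x * ·))` and `G y = μ (f (· * y))`, so that the claim is `μ F = ν G`.
For a finite combination of point masses `ρ = ∑ cₖ δ_{yₖ}` the exchange
`μ (x ↦ ρ (f (x * ·))) = ρ G` is linearity of `μ`. Separating a point from a convex set in `ℝⁿ`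
(Helly's lemma) approximates `ν` on finitely many functions by such a `ρ` with `∑ |cₖ| ≤ ‖ν‖`.
The functions `x ↦ ρ (f (x * ·))`, `ρ` in the `‖ν‖`-ball of `Meas`, form a bounded uniformly
equicontinuous set containing `F`; as `μ` is a uniform measure, `μ` of such a function is close
to `μ F` once `ρ` is close to `ν` at `G` and at finitely many translates `f (x * ·)`.
Commutativity makes `(x, y) ↦ f (x * y)` symmetric, which is what makes `G` uniformly continuous.
-/

open Finset

def pointCombination {X κ : Type*} [Fintype κ] (c : κ → ℝ) (y : κ → X) (g : X → ℝ) : ℝ :=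
  ∑ k, c k * g (y k)

section Meas

variable {X : Type*} [UniformSpace X]

theorem IsUb.add {f g : X → ℝ} (hf : IsUb f) (hg : IsUb g) : IsUb (f + g) := by
  obtain ⟨A, hA⟩ := hf.2
  obtain ⟨B, hB⟩ := hg.2
  exact ⟨hf.1.add hg.1, A + B, fun x => (abs_add_le _ _).trans (add_le_add (hA x) (hB x))⟩

theorem IsUb.const_smul {f : X → ℝ} (hf : IsUb f) (c : ℝ) : IsUb (c • f) := by
  obtain ⟨A, hA⟩ := hf.2
  refine ⟨hf.1.const_smul c, |c| * A, fun x => ?_⟩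
  simpa [abs_mul] using mul_le_mul_of_nonneg_left (hA x) (abs_nonneg c)

variable (X) in
def ubSubmodule : Submodule ℝ (X → ℝ) where
  carrier := {f | IsUb f}
  add_mem' := IsUb.add
  zero_mem' := ⟨uniformContinuous_const, 0, by simp⟩
  smul_mem' c _ hf := hf.const_smul c

theorem IsUb.sub {f g : X → ℝ} (hf : IsUb f) (hg : IsUb g) : IsUb (f - g) :=
  (ubSubmodule X).sub_mem hf hg

variable {μ : (X → ℝ) → ℝ}

@[simps]
def IsMeas.toLinearMap (hμ : IsMeas μ) : ubSubmodule X →ₗ[ℝ] ℝ where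
  toFun f := μ f
  map_add' f g := hμ.1 f g f.2 g.2
  map_smul' c f := hμ.2.1 c f f.2

theorem IsMeas.map_zero (hμ : IsMeas μ) : μ 0 = 0 :=
  _root_.map_zero hμ.toLinearMap

theorem IsMeas.map_sub (hμ : IsMeas μ) {f g : X → ℝ} (hf : IsUb f) (hg : IsUb g) :
    μ (f - g) = μ f - μ g :=
  _root_.map_sub hμ.toLinearMap ⟨f, hf⟩ ⟨g, hg⟩

theorem IsMeas.map_sum (hμ : IsMeas μ) {ι : Type*} [Fintype ι] (c : ι → ℝ) {g : ι → X → ℝ}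
    (hg : ∀ i, IsUb (g i)) : μ (∑ i, c i • g i) = ∑ i, c i * μ (g i) := by
  have h := _root_.map_sum hμ.toLinearMap (fun i => c i • (⟨g i, hg i⟩ : ubSubmodule X)) univ
  simp only [map_smul, smul_eq_mul] at h
  simp only [IsMeas.toLinearMap_apply, Submodule.coe_sum, Submodule.coe_smul] at h
  exact h

def IsNormBound (μ : (X → ℝ) → ℝ) (C : ℝ) : Prop :=
  ∀ g, IsUb g → ∀ t, 0 ≤ t → (∀ x, |g x| ≤ t) → |μ g| ≤ C * t

theorem IsMeas.exists_isNormBound (hμ : IsMeas μ) : ∃ C, 0 < C ∧ IsNormBound μ C := by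
  obtain ⟨C, hC⟩ := hμ.2.2
  refine ⟨max C 1, by positivity, fun g hg t ht hgt => ?_⟩
  rcases ht.eq_or_lt with rfl | ht
  · have : g = 0 := funext fun x => abs_nonpos_iff.1 (hgt x)
    simp [this, hμ.map_zero]
  · have hscaled : |μ (t⁻¹ • g)| ≤ C := hC _ (hg.const_smul _) fun x => by
      simpa [abs_mul, abs_of_pos ht, inv_mul_le_iff₀ ht] using hgt x
    rw [hμ.2.1 _ _ hg, abs_mul, abs_inv, abs_of_pos ht, inv_mul_le_iff₀ ht] at hscaled
    nlinarith [le_max_left C 1]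

theorem isNormBound_pointCombination {κ : Type*} [Fintype κ] {c : κ → ℝ} {C : ℝ}
    (hc : ∑ k, |c k| ≤ C) (y : κ → X) : IsNormBound (pointCombination c y) C := by
  intro g _ t ht hgt
  calc |∑ k, c k * g (y k)| ≤ ∑ k, |c k| * t :=
        (abs_sum_le_sum_abs _ _).trans (sum_le_sum fun k _ => by
          rw [abs_mul]; exact mul_le_mul_of_nonneg_left (hgt _) (abs_nonneg _))
    _ ≤ C * t := by rw [← sum_mul]; exact mul_le_mul_of_nonneg_right hc ht

theorem isMeas_pointCombination {κ : Type*} [Fintype κ] (c : κ → ℝ) (y : κ → X) :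
    IsMeas (pointCombination c y) := by
  refine ⟨fun f g _ _ => ?_, fun a f _ => ?_, ∑ k, |c k|, fun g hg hg1 => ?_⟩
  · simp [pointCombination, mul_add, sum_add_distrib]
  · simp [pointCombination, mul_sum, mul_left_comm]
  · simpa using isNormBound_pointCombination le_rfl y g hg 1 zero_le_one hg1

theorem dirProd_pointCombination {Y κ : Type*} [Fintype κ] (hμ : IsMeas μ) (c : κ → ℝ)
    (y : κ → Y) {f : X × Y → ℝ} (hf : ∀ k, IsUb fun x => f (x, y k)) :
    dirProd μ (pointCombination c y) f = dirProd (pointCombination c y) μ (f ∘ Prod.swap) := by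
  show μ (fun x => ∑ k, c k * f (x, y k)) = ∑ k, c k * μ fun x => f (x, y k)
  rw [← hμ.map_sum c hf]
  congr 1
  ext x
  simp

end Meas

section Helly

variable {X ι : Type*} [UniformSpace X] [Fintype ι] {ν : (X → ℝ) → ℝ} {C : ℝ}
  {g : ι → X → ℝ}

theorem IsMeas.mem_closure_convexHull [Nonempty X] (hν : IsMeas ν) (hC : 0 < C)
    (hνC : IsNormBound ν C) (hg : ∀ i, IsUb (g i)) :
    (fun i => ν (g i)) ∈
      closure (convexHull ℝ {w | ∃ (s : ℝ) (y : X), |s| ≤ C ∧ w = s • fun i => g i y}) := by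
  classical
  by_contra hv
  obtain ⟨φ, u, hφu, huv⟩ :=
    geometric_hahn_banach_closed_point (convex_convexHull ℝ _).closure isClosed_closure hv
  set a : ι → ℝ := fun i => φ fun j => if i = j then 1 else 0
  have hφ : ∀ w : ι → ℝ, φ w = ∑ i, w i * a i :=
    (φ : (ι → ℝ) →ₗ[ℝ] ℝ).pi_apply_eq_sum_univ
  set h : X → ℝ := ∑ i, a i • g i
  have hh : IsUb h := (ubSubmodule X).sum_mem fun i _ => (ubSubmodule X).smul_mem _ (hg i)
  have hνh : ν h = φ fun i => ν (g i) := by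
    rw [hν.map_sum _ hg, hφ]
    simp [mul_comm]
  have hφh : ∀ s y, |s| ≤ C → s * h y < u := fun s y hs => by
    have hhy : h y = φ fun i => g i y := by
      rw [hφ]
      simp [h, mul_comm]
    simpa [hhy] using hφu _ (subset_closure (subset_convexHull ℝ _ ⟨s, y, hs, rfl⟩))
  have hu : 0 < u := by simpa using hφh 0 (Classical.arbitrary X) (by simpa using hC.le)
  have hhu : ∀ y, |h y| ≤ u / C := fun y => by
    have hCh : |C * h y| < u := abs_lt.2
      ⟨by linarith [hφh (-C) y (by rw [abs_neg, abs_of_pos hC])], hφh C y (abs_of_pos hC).le⟩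
    rw [abs_mul, abs_of_pos hC] at hCh
    rw [le_div_iff₀ hC]
    linarith
  have := hνC h hh (u / C) (div_nonneg hu.le hC.le) hhu
  rw [mul_div_cancel₀ u hC.ne', hνh] at this
  linarith [le_abs_self (φ fun i => ν (g i))]

theorem IsMeas.exists_pointCombination_approx (hν : IsMeas ν) (hC : 0 < C)
    (hνC : IsNormBound ν C) (hg : ∀ i, IsUb (g i)) {δ : ℝ} (hδ : 0 < δ) :
    ∃ (κ : Type) (_ : Fintype κ) (c : κ → ℝ) (y : κ → X),
      ∑ k, |c k| ≤ C ∧ ∀ i, |pointCombination c y (g i) - ν (g i)| < δ := by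
  rcases isEmpty_or_nonempty X with hX | hX
  · refine ⟨Empty, inferInstance, Empty.elim, Empty.elim, by simpa using hC.le, fun i => ?_⟩
    simpa [pointCombination, Subsingleton.elim (g i) 0, hν.map_zero] using hδ
  obtain ⟨b, hb, hvb⟩ := Metric.mem_closure_iff.1 (hν.mem_closure_convexHull hC hνC hg) δ hδ
  obtain ⟨κ, _, w, z, hw₀, hw₁, hz, rfl⟩ := mem_convexHull_iff_exists_fintype.1 hb
  choose s y hs hzy using hz
  refine ⟨κ, inferInstance, fun k => w k * s k, y, ?_, fun i => ?_⟩
  · calc ∑ k, |w k * s k| ≤ ∑ k, w k * C := sum_le_sum fun k _ => by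
          rw [abs_mul, abs_of_nonneg (hw₀ k)]
          exact mul_le_mul_of_nonneg_left (hs k) (hw₀ k)
      _ = C := by rw [← sum_mul, hw₁, one_mul]
  · have := (dist_le_pi_dist _ _ i).trans_lt hvb
    rw [abs_sub_comm]
    simpa [pointCombination, hzy, dist_comm, Real.dist_eq, mul_assoc] using this

end Helly

section Fubini

variable {X Y : Type*} [UniformSpace X] [UniformSpace Y]

def partialIntegrals (f : X × Y → ℝ) (C : ℝ) : Set (X → ℝ) :=
  {F | ∃ ρ : (Y → ℝ) → ℝ, IsMeas ρ ∧ IsNormBound ρ C ∧ F = fun x => ρ fun y => f (x, y)}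

variable {f : X × Y → ℝ} {C : ℝ}

theorem Semiuniform.isUb_section (hf : Semiuniform f) (x : X) : IsUb fun y => f (x, y) :=
  ⟨hf.2.2 x, hf.1.imp fun _ hB y => hB (x, y)⟩

theorem Semiuniform.exists_bound_partialIntegrals (hf : Semiuniform f) (C : ℝ) :
    ∃ D, ∀ F ∈ partialIntegrals f C, ∀ x, |F x| ≤ D := by
  obtain ⟨B, hB⟩ := hf.1
  refine ⟨C * max B 0, ?_⟩
  rintro _ ⟨ρ, -, hρC, rfl⟩ x
  exact hρC _ (hf.isUb_section x) _ (le_max_right _ _) fun y => (hB _).trans (le_max_left _ _)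

theorem Semiuniform.uniformEquicontinuous_partialIntegrals (hf : Semiuniform f) (hC : 0 < C) :
    (partialIntegrals f C).UniformEquicontinuous := by
  refine Metric.uniformity_basis_dist_le.uniformEquicontinuous_iff_right.2 fun ε hε => ?_
  have hsec := Metric.uniformity_basis_dist_le.uniformEquicontinuous_iff_right.1 hf.2.1
    (ε / C) (div_pos hε hC)
  filter_upwards [hsec] with p hp
  rintro ⟨_, ρ, hρ, hρC, rfl⟩
  rw [Real.dist_eq, ← hρ.map_sub (hf.isUb_section _) (hf.isUb_section _)]
  calc _ ≤ C * (ε / C) := hρC _ ((hf.isUb_section _).sub (hf.isUb_section _)) _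
          (div_pos hε hC).le hp
    _ = ε := mul_div_cancel₀ ε hC.ne'

theorem Semiuniform.isUb_of_mem_partialIntegrals (hf : Semiuniform f) (hC : 0 < C)
    {F : X → ℝ} (hF : F ∈ partialIntegrals f C) : IsUb F :=
  ⟨(hf.uniformEquicontinuous_partialIntegrals hC).uniformContinuous_of_mem hF,
    (hf.exists_bound_partialIntegrals C).imp fun _ hD => hD F hF⟩

theorem IsUniformMeasure.dirProd_swap {μ : (X → ℝ) → ℝ} {ν : (Y → ℝ) → ℝ}
    (hμU : IsUniformMeasure μ) (hμ : IsMeas μ) (hν : IsMeas ν) (hf : Semiuniform f)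
    (hf' : Semiuniform (f ∘ Prod.swap)) :
    dirProd μ ν f = dirProd ν μ (f ∘ Prod.swap) := by
  obtain ⟨C, hC, hνC⟩ := hν.exists_isNormBound
  obtain ⟨Cμ, hCμ, hμC⟩ := hμ.exists_isNormBound
  set F : X → ℝ := fun x => ν fun y => f (x, y)
  set G : Y → ℝ := fun y => μ fun x => f (x, y)
  have hG : IsUb G := hf'.isUb_of_mem_partialIntegrals hCμ ⟨μ, hμ, hμC, rfl⟩
  refine eq_of_forall_dist_le fun ε hε => ?_
  obtain ⟨K, δ, hδ, hK⟩ := hμU _ (hf.exists_bound_partialIntegrals C)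
    (hf.uniformEquicontinuous_partialIntegrals hC) F ⟨ν, hν, hνC, rfl⟩ (ε / 2) (half_pos hε)
  obtain ⟨κ, _, c, y, hc, hρν⟩ := hν.exists_pointCombination_approx hC hνC
    (g := fun i : Option K => i.elim G fun x y => f (x.1, y))
    (by rintro (_ | x); exacts [hG, hf.isUb_section x]) (lt_min hδ (half_pos hε))
  set ρ := pointCombination c y
  have hexchange : μ (fun x => ρ fun y => f (x, y)) = ρ G :=
    dirProd_pointCombination hμ c y fun k => hf'.isUb_section (y k)
  have hμF : |μ F - ρ G| < ε / 2 := by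
    rw [← hexchange, abs_sub_comm]
    exact hK _ ⟨ρ, isMeas_pointCombination c y, isNormBound_pointCombination hc y, rfl⟩
      fun x hx => (hρν (some ⟨x, hx⟩)).trans_le (min_le_left _ _)
  have hνG : |ρ G - ν G| < ε / 2 := (hρν none).trans_le (min_le_right _ _)
  calc dist (dirProd μ ν f) (dirProd ν μ (f ∘ Prod.swap)) = |μ F - ν G| := rfl
    _ ≤ |μ F - ρ G| + |ρ G - ν G| := abs_sub_le _ _ _
    _ ≤ ε := by linarith

end Fubini

theorem UniformContinuous.comp_uniformEquicontinuous {α β γ ι : Type*} [UniformSpace α]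
    [UniformSpace β] [UniformSpace γ] {g : β → γ} (hg : UniformContinuous g) {F : ι → α → β}
    (hF : UniformEquicontinuous F) : UniformEquicontinuous fun i => g ∘ F i :=
  fun _ hU => hF _ (hg hU)

section Group

variable {G : Type*} [Group G] [UniformSpace G]

theorem uniformEquicontinuous_mul_right [IsRightUniformGroup G] :
    UniformEquicontinuous fun z : G => (· * z) := by
  intro U hU
  rw [uniformity_eq_comap_mul_inv_nhds_one G] at hU ⊢
  obtain ⟨W, hW, hWU⟩ := mem_comap.1 hU
  filter_upwards [preimage_mem_comap hW] with p hp z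
  exact hWU (by simpa [mul_assoc] using hp)

theorem IsUb.semiuniform_comp_mul [IsUniformGroup G] {f : G → ℝ} (hf : IsUb f) :
    Semiuniform fun p : G × G => f (p.1 * p.2) :=
  ⟨hf.2.imp fun _ hB _ => hB _, hf.1.comp_uniformEquicontinuous uniformEquicontinuous_mul_right,
    fun x => hf.1.comp (uniformContinuous_mul_left x)⟩

end Group

theorem stmt15 {G : Type*} [CommGroup G] [TopologicalSpace G] [IsTopologicalGroup G] :
    letI : UniformSpace G := IsTopologicalGroup.rightUniformSpace G
    ∀ μ ν : (G → ℝ) → ℝ,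
      IsMeas μ → IsUniformMeasure μ → IsMeas ν → IsUniformMeasure ν →
      ∀ f : G → ℝ, IsUb f → conv μ ν f = conv ν μ f := by
  let _ : UniformSpace G := IsTopologicalGroup.rightUniformSpace G
  have _ : IsUniformGroup G := isUniformGroup_of_commGroup
  intro μ ν hμ hμU hν _ f hf
  have hswap : (fun p : G × G => f (p.1 * p.2)) ∘ Prod.swap = fun p => f (p.1 * p.2) :=
    funext fun p => congrArg f (mul_comm _ _)
  have := hμU.dirProd_swap hμ hν hf.semiuniform_comp_mul (hswap ▸ hf.semiuniform_comp_mul)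
  rwa [hswap] at this
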